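/- arXiv:1408.5689 — 5 statements merged into one kernel-verified Lean document; each statement's English description precedes it below -/
import Mathlib

section
/- Let n ≥ 1 be an integer and let S be a χ²-random variable with n degrees of freedom. Then for every real x > 0 one has Pr[S − n ≥ 2√(n·x) + 2x] ≤ e^{−x}. -/
/-!
Chernoff's method. The moment generating function of the square of a standard Gaussian is
`(1 - 2t)^(-1/2) ≤ exp (t + t² / (1 - 2t))` for `0 ≤ t < 1/2`, so by independence
`P[S ≥ n + ε] ≤ exp (-t ε + n (t + t² / (1 - 2t)))`. With `m = √n`, `s = √x` and
`ε = 2ms + 2s²`, the choice `t = s / (m + 2s)` makes this exponent exactly `-x`.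
-/

open MeasureTheory ProbabilityTheory Real

lemma gaussianPDFReal_zero_one_mul_exp_mul_sq (t y : ℝ) :
    gaussianPDFReal 0 1 y * exp (t * y ^ 2) = (√(2 * π))⁻¹ * exp (-(1 / 2 - t) * y ^ 2) := by
  rw [gaussianPDFReal, NNReal.coe_one, mul_one, mul_one, mul_assoc, ← exp_add]
  ring_nf

lemma mgf_sq_gaussianReal {t : ℝ} (ht : t < 1 / 2) :
    mgf (fun y ↦ y ^ 2) (gaussianReal 0 1) t = (√(1 - 2 * t))⁻¹ := by
  have hpos : 0 < 1 / 2 - t := by linarith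
  simp_rw [mgf, integral_gaussianReal_eq_integral_smul one_ne_zero, smul_eq_mul,
    gaussianPDFReal_zero_one_mul_exp_mul_sq]
  rw [integral_const_mul, integral_gaussian]
  rw [show π / (1 / 2 - t) = 2 * π * (1 - 2 * t)⁻¹ by field_simp,
    sqrt_mul (by positivity : 0 ≤ 2 * π), sqrt_inv, ← mul_assoc, inv_mul_cancel₀ (by positivity),
    one_mul]

lemma mgf_sq_of_map_eq_gaussianReal {Ω : Type*} [MeasurableSpace Ω] {μ : Measure Ω}
    {X : Ω → ℝ} (hX : AEMeasurable X μ) (hlaw : μ.map X = gaussianReal 0 1) {t : ℝ}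
    (ht : t < 1 / 2) : mgf (fun ω ↦ X ω ^ 2) μ t = (√(1 - 2 * t))⁻¹ := by
  rw [← mgf_sq_gaussianReal ht, ← hlaw, mgf_map hX (by fun_prop)]
  rfl

lemma inv_one_sub_le_exp {u : ℝ} (hu0 : 0 ≤ u) (hu1 : u < 1) :
    (1 - u)⁻¹ ≤ exp (u + u ^ 2 / (2 * (1 - u))) := by
  have hc : 0 < 1 - u := by linarith
  set a := u + u ^ 2 / (2 * (1 - u)) with ha
  have ha0 : 0 ≤ a := by positivity
  -- the second-order Taylor bound of `exp` already suffices
  have hexp : 1 + a + a ^ 2 / 2 ≤ exp a := by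
    have h := sum_le_exp_of_nonneg ha0 3
    simp only [Finset.sum_range_succ, Finset.sum_range_zero, Nat.factorial] at h
    norm_num at h
    linarith
  have hpoly : 1 ≤ (1 + a + a ^ 2 / 2) * (1 - u) := by
    have : a * (1 - u) = u - u ^ 2 / 2 := by rw [ha]; field_simp; ring
    nlinarith [sq_nonneg u, mul_nonneg ha0 ha0, mul_nonneg (mul_nonneg ha0 ha0) hc.le]
  rw [inv_le_iff_one_le_mul₀ hc]
  nlinarith

lemma inv_sqrt_one_sub_two_mul_le_exp {t : ℝ} (ht0 : 0 ≤ t) (ht : t < 1 / 2) :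
    (√(1 - 2 * t))⁻¹ ≤ exp (t + t ^ 2 / (1 - 2 * t)) := by
  have h := inv_one_sub_le_exp (u := 2 * t) (by positivity) (by linarith)
  rw [← sqrt_inv, sqrt_le_iff]
  refine ⟨(exp_pos _).le, h.trans_eq ?_⟩
  rw [← exp_nat_mul]
  congr 1
  field_simp
  ring

section ChiSquared

variable {Ω ι : Type*} [MeasurableSpace Ω] {μ : Measure Ω} [Fintype ι] {G : ι → Ω → ℝ}

lemma mgf_sum_sq_of_map_eq_gaussianReal (hmeas : ∀ i, Measurable (G i))
    (hlaw : ∀ i, μ.map (G i) = gaussianReal 0 1) (hindep : iIndepFun G μ) {t : ℝ}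
    (ht : t < 1 / 2) :
    mgf (fun ω ↦ ∑ i, G i ω ^ 2) μ t = (√(1 - 2 * t))⁻¹ ^ Fintype.card ι := by
  have hsq : iIndepFun (fun i ω ↦ G i ω ^ 2) μ := hindep.comp _ (fun _ ↦ measurable_id.pow_const 2)
  have hsum := hsq.mgf_sum (fun i ↦ (hmeas i).pow_const 2) Finset.univ (t := t)
  simp only [Finset.sum_fn] at hsum
  rw [hsum, Finset.prod_eq_pow_card fun i _ ↦
    mgf_sq_of_map_eq_gaussianReal (hmeas i).aemeasurable (hlaw i) ht, Finset.card_univ]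

lemma measureReal_le_sum_sq_le_exp [IsProbabilityMeasure μ] (hmeas : ∀ i, Measurable (G i))
    (hlaw : ∀ i, μ.map (G i) = gaussianReal 0 1) (hindep : iIndepFun G μ) {t : ℝ}
    (ht0 : 0 ≤ t) (ht : t < 1 / 2) (ε : ℝ) :
    μ.real {ω | ε ≤ ∑ i, G i ω ^ 2}
      ≤ exp (-t * ε + Fintype.card ι * (t + t ^ 2 / (1 - 2 * t))) := by
  have hmgf := mgf_sum_sq_of_map_eq_gaussianReal hmeas hlaw hindep ht
  have hint : Integrable (fun ω ↦ exp (t * ∑ i, G i ω ^ 2)) μ := by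
    rw [← mgf_pos_iff, hmgf]
    exact pow_pos (inv_pos.2 (sqrt_pos.2 (by linarith))) _
  calc μ.real {ω | ε ≤ ∑ i, G i ω ^ 2}
      ≤ exp (-t * ε) * mgf (fun ω ↦ ∑ i, G i ω ^ 2) μ t := measure_ge_le_exp_mul_mgf ε ht0 hint
    _ ≤ exp (-t * ε) * exp (t + t ^ 2 / (1 - 2 * t)) ^ Fintype.card ι := by
      rw [hmgf]
      gcongr
      exact inv_sqrt_one_sub_two_mul_le_exp ht0 ht
    _ = exp (-t * ε + Fintype.card ι * (t + t ^ 2 / (1 - 2 * t))) := by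
      rw [← exp_nat_mul, ← exp_add]

end ChiSquared

lemma chernoff_exponent_eq {m s t : ℝ} (hm : 0 < m) (hs : 0 ≤ s) (ht : t = s / (m + 2 * s)) :
    -t * (m ^ 2 + (2 * (m * s) + 2 * s ^ 2)) + m ^ 2 * (t + t ^ 2 / (1 - 2 * t)) = -s ^ 2 := by
  have hden : 0 < m + 2 * s := by positivity
  have h12 : 1 - 2 * t = m / (m + 2 * s) := by rw [ht]; field_simp; ring
  rw [h12, ht]
  field_simp
  ring

/-- **Upper tail bound for the χ² distribution (Laurent–Massart).**
If `S = ∑ i, (G i)²` where `G 1, …, G n` are i.i.d. standard real Gaussians, then for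
every `x > 0`, `Pr[S - n ≥ 2√(n x) + 2 x] ≤ exp (-x)`. -/
theorem chiSq_upper_tail
    {Ω : Type*} [MeasurableSpace Ω] (μ : Measure Ω) [IsProbabilityMeasure μ]
    (n : ℕ) (hn : 1 ≤ n) (G : Fin n → Ω → ℝ)
    (hmeas : ∀ i, Measurable (G i))
    (hgauss : ∀ i, Measure.map (G i) μ = gaussianReal 0 1)
    (hindep : iIndepFun G μ)
    (S : Ω → ℝ) (hS : ∀ ω, S ω = ∑ i, (G i ω) ^ 2)
    (x : ℝ) (hx : 0 < x) :
    μ {ω | 2 * Real.sqrt (n * x) + 2 * x ≤ S ω - n} ≤ ENNReal.ofReal (Real.exp (-x)) := by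
  set m := √(n : ℝ)
  set s := √x
  have hm : 0 < m := sqrt_pos.2 (by exact_mod_cast hn)
  have hs : 0 ≤ s := sqrt_nonneg x
  have hm2 : m ^ 2 = n := sq_sqrt (Nat.cast_nonneg n)
  have hs2 : s ^ 2 = x := sq_sqrt hx.le
  set t := s / (m + 2 * s) with ht_def
  have ht0 : 0 ≤ t := by positivity
  have ht : t < 1 / 2 := by rw [div_lt_iff₀ (by positivity)]; linarith
  have hset : {ω | 2 * √(n * x) + 2 * x ≤ S ω - n}
      = {ω | m ^ 2 + (2 * (m * s) + 2 * s ^ 2) ≤ ∑ i, G i ω ^ 2} := by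
    ext ω
    rw [Set.mem_ofPred_eq, Set.mem_ofPred_eq, ← hS, sqrt_mul (Nat.cast_nonneg n), hm2, hs2]
    constructor <;> intro h <;> linarith
  rw [hset, ← ofReal_measureReal]
  gcongr
  calc _ ≤ _ := measureReal_le_sum_sq_le_exp hmeas hgauss hindep ht0 ht _
    _ = exp (-x) := by
      rw [Fintype.card_fin, ← hm2, chernoff_exponent_eq hm hs ht_def, hs2]
end

section
/- Let X and Y be nonnegative real random variables on a common probability space, with Y integrable. Let a > 0, b > 0 and δ > 0 be reals, and let ε̃ : (0,∞) → [0,∞) be a function such that Pr[X ≤ a and Y ≥ y] ≤ ε̃(y) for every y > 0. Let (b_k)_{k≥0} be a nondecreasing sequence of reals with b₀ = b and b_k → ∞ as k → ∞. Let E[Y | X] denote the conditional expectation of Y given the σ-algebra generated by X. Then Pr[ X ≤ a and E[Y | X] ≥ b + δ ] ≤ (1/δ)·Σ_{k=0}^{∞} b_{k+1}·ε̃(b_k). -/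
/-!
On `B = {X ≤ a, E[Y | X] ≥ b + δ}`, which is `σ(X)`-measurable, the defining property of the
conditional expectation gives `(b + δ) μ(B) ≤ ∫_B Y`. Cutting the range of `Y` at the levels
`b_k` yields `Y ≤ b + ∑_k b_{k+1} 1{Y ≥ b_k}`, and since `B ⊆ {X ≤ a}` each term integrates
over `B` to at most `b_{k+1} ε̃(b_k)`. Subtracting `b μ(B)` leaves
`δ μ(B) ≤ ∑_k b_{k+1} ε̃(b_k)`.
-/

open MeasureTheory Filter Set

open scoped ENNReal

theorem ofReal_le_add_tsum_indicator_Ici {bs : ℕ → ℝ} (hbs : Tendsto bs atTop atTop) (y : ℝ) :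
    ENNReal.ofReal y ≤ ENNReal.ofReal (bs 0) +
      ∑' k, (Ici (bs k)).indicator (fun _ ↦ ENNReal.ofReal (bs (k + 1))) y := by
  classical
  rcases lt_or_ge y (bs 0) with hy | hy
  · exact (ENNReal.ofReal_le_ofReal hy.le).trans le_self_add
  have hex : ∃ N, y < bs N := (hbs.eventually_gt_atTop y).exists
  -- `n + 1` is the first index with `y < bs (n + 1)`, so `bs n ≤ y < bs (n + 1)`.
  obtain ⟨n, hn⟩ : ∃ n, Nat.find hex = n + 1 :=
    Nat.exists_eq_succ_of_ne_zero fun h ↦ (Nat.find_eq_zero hex).mp h |>.not_ge hy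
  have hlt : y < bs (n + 1) := hn ▸ Nat.find_spec hex
  have hge : bs n ≤ y := not_lt.mp (Nat.find_min hex (by omega))
  calc ENNReal.ofReal y
      ≤ (Ici (bs n)).indicator (fun _ ↦ ENNReal.ofReal (bs (n + 1))) y := by
        rw [indicator_of_mem (mem_Ici.mpr hge)]
        exact ENNReal.ofReal_le_ofReal hlt.le
    _ ≤ ∑' k, (Ici (bs k)).indicator (fun _ ↦ ENNReal.ofReal (bs (k + 1))) y :=
        ENNReal.le_tsum n
    _ ≤ _ := le_add_self

theorem lintegral_ofReal_le_add_tsum {Ω : Type*} [MeasurableSpace Ω] {μ : Measure Ω}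
    {f : Ω → ℝ} (hf : AEMeasurable f μ) {bs : ℕ → ℝ} (hbs : Tendsto bs atTop atTop) :
    ∫⁻ ω, ENNReal.ofReal (f ω) ∂μ ≤
      ENNReal.ofReal (bs 0) * μ univ +
        ∑' k, ENNReal.ofReal (bs (k + 1)) * μ {ω | bs k ≤ f ω} := by
  have hind : ∀ k ω, (Ici (bs k)).indicator (fun _ ↦ ENNReal.ofReal (bs (k + 1))) (f ω) =
      {ω | bs k ≤ f ω}.indicator (fun _ ↦ ENNReal.ofReal (bs (k + 1))) ω := fun _ _ ↦ rfl
  calc ∫⁻ ω, ENNReal.ofReal (f ω) ∂μ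
      ≤ ∫⁻ ω, ENNReal.ofReal (bs 0) +
          ∑' k, (Ici (bs k)).indicator (fun _ ↦ ENNReal.ofReal (bs (k + 1))) (f ω) ∂μ :=
        lintegral_mono fun ω ↦ ofReal_le_add_tsum_indicator_Ici hbs (f ω)
    _ = _ := by
        have hmeas : ∀ k, NullMeasurableSet {ω | bs k ≤ f ω} μ := fun k ↦
          nullMeasurableSet_le aemeasurable_const hf
        rw [lintegral_add_left measurable_const, lintegral_const]
        simp only [hind]
        rw [lintegral_tsum fun k ↦ aemeasurable_const.indicator₀ (hmeas k)]
        simp only [lintegral_indicator_const₀ (hmeas _)]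

theorem ofReal_integral_le_lintegral_ofReal {Ω : Type*} [MeasurableSpace Ω] {μ : Measure Ω}
    {f : Ω → ℝ} (hf : Integrable f μ) :
    ENNReal.ofReal (∫ ω, f ω ∂μ) ≤ ∫⁻ ω, ENNReal.ofReal (f ω) ∂μ := by
  refine ENNReal.ofReal_le_of_le_toReal ?_
  rw [integral_eq_lintegral_pos_part_sub_lintegral_neg_part hf]
  exact sub_le_self _ ENNReal.toReal_nonneg

theorem ofReal_mul_le_setLIntegral_of_le_condExp {Ω : Type*} {m m₀ : MeasurableSpace Ω}
    {μ : Measure Ω} [IsFiniteMeasure μ] (hm : m ≤ m₀) {f : Ω → ℝ} (hf : Integrable f μ)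
    {s : Set Ω} (hs : MeasurableSet[m] s) {c : ℝ} (hc : ∀ ω ∈ s, c ≤ (μ[f | m]) ω) :
    ENNReal.ofReal c * μ s ≤ ∫⁻ ω in s, ENNReal.ofReal (f ω) ∂μ :=
  calc ENNReal.ofReal c * μ s = ENNReal.ofReal (c * μ.real s) := by
        rw [ENNReal.ofReal_mul' measureReal_nonneg, ofReal_measureReal]
    _ ≤ ENNReal.ofReal (∫ ω in s, f ω ∂μ) := by
        rw [← setIntegral_condExp hm hf hs]
        exact ENNReal.ofReal_le_ofReal <| setIntegral_ge_of_const_le_real (hm s hs)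
          (measure_ne_top μ s) hc integrable_condExp.integrableOn
    _ ≤ ∫⁻ ω in s, ENNReal.ofReal (f ω) ∂μ :=
        ofReal_integral_le_lintegral_ofReal hf.integrableOn

theorem ofReal_mul_measure_le_tsum_of_le_condExp {Ω : Type*} {m m₀ : MeasurableSpace Ω}
    {μ : Measure Ω} [IsFiniteMeasure μ] (hm : m ≤ m₀) {f : Ω → ℝ} (hf : Integrable f μ)
    {s : Set Ω} (hs : MeasurableSet[m] s) {bs : ℕ → ℝ} (hbs : Tendsto bs atTop atTop)
    (hbs0 : 0 ≤ bs 0) {δ : ℝ} (hδ : 0 ≤ δ) (hc : ∀ ω ∈ s, bs 0 + δ ≤ (μ[f | m]) ω) :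
    ENNReal.ofReal δ * μ s ≤ ∑' k, ENNReal.ofReal (bs (k + 1)) * μ ({ω | bs k ≤ f ω} ∩ s) := by
  refine (ENNReal.add_le_add_iff_left (a := ENNReal.ofReal (bs 0) * μ s) (by finiteness)).mp ?_
  calc ENNReal.ofReal (bs 0) * μ s + ENNReal.ofReal δ * μ s
      = ENNReal.ofReal (bs 0 + δ) * μ s := by rw [ENNReal.ofReal_add hbs0 hδ, add_mul]
    _ ≤ ∫⁻ ω in s, ENNReal.ofReal (f ω) ∂μ :=
        ofReal_mul_le_setLIntegral_of_le_condExp hm hf hs hc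
    _ ≤ _ := by
        simpa only [Measure.restrict_apply' (hm s hs), univ_inter] using
          lintegral_ofReal_le_add_tsum (hf.aemeasurable.restrict (s := s)) hbs

theorem condexp_large_of_tail_bounds_general
    {Ω : Type*} [MeasurableSpace Ω] (μ : Measure Ω) [IsProbabilityMeasure μ]
    (X Y : Ω → ℝ) (hXmeas : Measurable X)
    (hYint : Integrable Y μ)
    (a b δ : ℝ) (hb : 0 < b) (hδ : 0 < δ)
    (etil : ℝ → ℝ)
    (hbound : ∀ y, 0 < y → (μ {ω | X ω ≤ a ∧ y ≤ Y ω}).toReal ≤ etil y)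
    (bs : ℕ → ℝ) (hbs : Monotone bs) (hbs0 : bs 0 = b)
    (hbstop : Filter.Tendsto bs Filter.atTop Filter.atTop) :
    μ {ω | X ω ≤ a ∧
        b + δ ≤ (μ[Y | MeasurableSpace.comap X (inferInstance : MeasurableSpace ℝ)]) ω}
      ≤ ENNReal.ofReal (1 / δ) * ∑' k : ℕ, ENNReal.ofReal (bs (k + 1) * etil (bs k)) := by
  set B := {ω | X ω ≤ a ∧
    b + δ ≤ (μ[Y | MeasurableSpace.comap X (inferInstance : MeasurableSpace ℝ)]) ω}
  have hBm : MeasurableSet[MeasurableSpace.comap X inferInstance] B :=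
    MeasurableSet.inter (measurableSet_Iic.preimage (comap_measurable X))
      (measurableSet_le measurable_const stronglyMeasurable_condExp.measurable :
        MeasurableSet[MeasurableSpace.comap X inferInstance] {ω | b + δ ≤ (μ[Y | _]) ω})
  have hbs_pos : ∀ k, 0 < bs k := fun k ↦ hbs0 ▸ hb |>.trans_le (hbs k.zero_le)
  rw [ENNReal.ofReal_div_of_pos hδ, ENNReal.ofReal_one, one_div, ← ENNReal.mul_le_iff_le_inv
    (by simpa using hδ) ENNReal.ofReal_ne_top]
  refine (ofReal_mul_measure_le_tsum_of_le_condExp hXmeas.comap_le hYint hBm hbstop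
    (hbs_pos 0).le hδ.le fun ω hω ↦ hbs0 ▸ hω.2).trans (ENNReal.tsum_le_tsum fun k ↦ ?_)
  rw [ENNReal.ofReal_mul (hbs_pos (k + 1)).le]
  gcongr
  calc μ ({ω | bs k ≤ Y ω} ∩ B) ≤ μ {ω | X ω ≤ a ∧ bs k ≤ Y ω} :=
        measure_mono fun ω hω ↦ ⟨hω.2.1, hω.1⟩
    _ ≤ ENNReal.ofReal (etil (bs k)) := by
        rw [← ofReal_measureReal]
        exact ENNReal.ofReal_le_ofReal (hbound _ (hbs_pos k))

/-- **Bounding the probability that a conditional expectation is large (Lemma 6 in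
Leverrier's paper).** If `Pr[X ≤ a ∧ Y ≥ y] ≤ ε̃(y)` for all `y > 0` and `(b_k)` is a
nondecreasing sequence with `b₀ = b` tending to infinity, then
`Pr[X ≤ a ∧ E[Y|X] ≥ b + δ] ≤ (1/δ) ∑_k b_{k+1} ε̃(b_k)`. -/
theorem condexp_large_of_tail_bounds
    {Ω : Type*} [MeasurableSpace Ω] (μ : Measure Ω) [IsProbabilityMeasure μ]
    (X Y : Ω → ℝ) (hXmeas : Measurable X)
    (hXnn : ∀ ω, 0 ≤ X ω) (hYnn : ∀ ω, 0 ≤ Y ω) (hYint : Integrable Y μ)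
    (a b δ : ℝ) (ha : 0 < a) (hb : 0 < b) (hδ : 0 < δ)
    (etil : ℝ → ℝ) (hetil : ∀ y, 0 < y → 0 ≤ etil y)
    (hbound : ∀ y, 0 < y → (μ {ω | X ω ≤ a ∧ y ≤ Y ω}).toReal ≤ etil y)
    (bs : ℕ → ℝ) (hbs : Monotone bs) (hbs0 : bs 0 = b)
    (hbstop : Filter.Tendsto bs Filter.atTop Filter.atTop) :
    μ {ω | X ω ≤ a ∧
        b + δ ≤ (μ[Y | MeasurableSpace.comap X (inferInstance : MeasurableSpace ℝ)]) ω}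
      ≤ ENNReal.ofReal (1 / δ) * ∑' k : ℕ, ENNReal.ofReal (bs (k + 1) * etil (bs k)) :=
  condexp_large_of_tail_bounds_general μ X Y hXmeas hYint a b δ hb hδ etil hbound bs hbs hbs0 hbstop
end

section
/- Let X and Y be real random variables on a common probability space, with Y nonnegative and integrable. Let a > 0, b > 0, δ > 0 and ε₂ ≥ 0 be reals such that Pr[X ≥ a and Y ≤ b] ≤ ε₂. Let E[Y | X] denote the conditional expectation of Y given the σ-algebra generated by X. Then Pr[ X ≥ a and E[Y | X] ≤ b − δ ] ≤ b·ε₂/δ. -/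
/-!
The event `A = {X ≥ a, E[Y|X] ≤ b - δ}` is `σ(X)`-measurable, so
`∫_A Y = ∫_A E[Y|X] ≤ (b - δ) P(A)`. Markov's inequality on `A` gives
`∫_A Y ≥ b P(A ∩ {Y ≥ b}) ≥ b (P(A) - ε₂)`, and comparing the two bounds yields `δ P(A) ≤ b ε₂`.
-/

open MeasureTheory

section

variable {Ω : Type*} {m m0 : MeasurableSpace Ω} {μ : Measure Ω} {Y : Ω → ℝ}

theorem mul_measureReal_le_setIntegral_add [IsFiniteMeasure μ] (hYnn : 0 ≤ᵐ[μ] Y)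
    (hYint : Integrable Y μ) {A : Set Ω} (hA : MeasurableSet A) {b : ℝ} (hb : 0 ≤ b) :
    b * μ.real A ≤ ∫ ω in A, Y ω ∂μ + b * μ.real (A ∩ {ω | Y ω < b}) := by
  have hsplit : μ.real A ≤ μ.real (A ∩ {ω | b ≤ Y ω}) + μ.real (A ∩ {ω | Y ω < b}) := by
    refine (measureReal_mono fun ω hω ↦ ?_).trans (measureReal_union_le _ _)
    rcases le_or_gt b (Y ω) with h | h
    exacts [Or.inl ⟨hω, h⟩, Or.inr ⟨hω, h⟩]
  have hmarkov : b * μ.real (A ∩ {ω | b ≤ Y ω}) ≤ ∫ ω in A, Y ω ∂μ := by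
    have := mul_meas_ge_le_integral_of_nonneg (ae_restrict_of_ae (s := A) hYnn)
      hYint.integrableOn b
    rwa [measureReal_restrict_apply' hA, Set.inter_comm] at this
  nlinarith

theorem setIntegral_le_of_condExp_le (hm : m ≤ m0) [IsFiniteMeasure μ] (hYint : Integrable Y μ)
    {A : Set Ω} (hA : MeasurableSet[m] A) {c : ℝ} (hc : ∀ ω ∈ A, μ[Y | m] ω ≤ c) :
    ∫ ω in A, Y ω ∂μ ≤ c * μ.real A := by
  rw [← setIntegral_condExp hm hYint hA]
  calc ∫ ω in A, μ[Y | m] ω ∂μ ≤ ∫ _ in A, c ∂μ :=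
        setIntegral_mono_on integrable_condExp.integrableOn (integrableOn_const (by finiteness))
          (hm A hA) hc
    _ = c * μ.real A := by rw [setIntegral_const, smul_eq_mul, mul_comm]

theorem mul_measureReal_condExp_le_sub_le (hm : m ≤ m0) [IsFiniteMeasure μ]
    (hYnn : 0 ≤ᵐ[μ] Y) (hYint : Integrable Y μ) {B : Set Ω} (hB : MeasurableSet[m] B)
    {b : ℝ} (hb : 0 ≤ b) (δ : ℝ) :
    δ * μ.real (B ∩ {ω | μ[Y | m] ω ≤ b - δ}) ≤ b * μ.real (B ∩ {ω | Y ω ≤ b}) := by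
  set A := B ∩ {ω | μ[Y | m] ω ≤ b - δ}
  have hA : MeasurableSet[m] A :=
    hB.inter (measurableSet_le stronglyMeasurable_condExp.measurable measurable_const)
  have hmarkov := mul_measureReal_le_setIntegral_add hYnn hYint (hm A hA) hb
  have hcond := setIntegral_le_of_condExp_le hm hYint hA fun ω hω ↦ hω.2
  have hsmall : μ.real (A ∩ {ω | Y ω < b}) ≤ μ.real (B ∩ {ω | Y ω ≤ b}) :=
    measureReal_mono fun ω ⟨⟨hωB, _⟩, hωY⟩ ↦ ⟨hωB, le_of_lt (α := ℝ) hωY⟩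
  nlinarith

end

theorem condexp_small_of_tail_bound_general
    {Ω : Type*} [MeasurableSpace Ω] (μ : Measure Ω) [IsProbabilityMeasure μ]
    (X Y : Ω → ℝ) (hXmeas : Measurable X)
    (hYnn : ∀ ω, 0 ≤ Y ω) (hYint : Integrable Y μ)
    (a b δ ε₂ : ℝ) (hb : 0 < b) (hδ : 0 < δ)
    (hbound : (μ {ω | a ≤ X ω ∧ Y ω ≤ b}).toReal ≤ ε₂) :
    μ {ω | a ≤ X ω ∧
        (μ[Y | MeasurableSpace.comap X (inferInstance : MeasurableSpace ℝ)]) ω ≤ b - δ}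
      ≤ ENNReal.ofReal (b * ε₂ / δ) := by
  have hB : MeasurableSet[MeasurableSpace.comap X inferInstance] {ω | a ≤ X ω} :=
    measurableSet_Ici.preimage (Measurable.of_comap_le le_rfl)
  rw [← ofReal_measureReal]
  refine ENNReal.ofReal_le_ofReal ((le_div_iff₀ hδ).2 ?_)
  calc _ = δ * μ.real ({ω | a ≤ X ω} ∩
          {ω | μ[Y | MeasurableSpace.comap X inferInstance] ω ≤ b - δ}) := mul_comm _ _
    _ ≤ b * μ.real ({ω | a ≤ X ω} ∩ {ω | Y ω ≤ b}) :=
      mul_measureReal_condExp_le_sub_le hXmeas.comap_le (ae_of_all μ hYnn) hYint hB hb.le δ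
    _ ≤ b * ε₂ := mul_le_mul_of_nonneg_left hbound hb.le

/-- **Bounding the probability that a conditional expectation is small (Lemma 7 in
Leverrier's paper).** If `Y ≥ 0` is integrable and `Pr[X ≥ a ∧ Y ≤ b] ≤ ε₂`, then
`Pr[X ≥ a ∧ E[Y|X] ≤ b - δ] ≤ b ε₂ / δ`. -/
theorem condexp_small_of_tail_bound
    {Ω : Type*} [MeasurableSpace Ω] (μ : Measure Ω) [IsProbabilityMeasure μ]
    (X Y : Ω → ℝ) (hXmeas : Measurable X)
    (hYnn : ∀ ω, 0 ≤ Y ω) (hYint : Integrable Y μ)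
    (a b δ ε₂ : ℝ) (ha : 0 < a) (hb : 0 < b) (hδ : 0 < δ) (hε₂ : 0 ≤ ε₂)
    (hbound : (μ {ω | a ≤ X ω ∧ Y ω ≤ b}).toReal ≤ ε₂) :
    μ {ω | a ≤ X ω ∧
        (μ[Y | MeasurableSpace.comap X (inferInstance : MeasurableSpace ℝ)]) ω ≤ b - δ}
      ≤ ENNReal.ofReal (b * ε₂ / δ) :=
  condexp_small_of_tail_bound_general μ X Y hXmeas hYnn hYint a b δ ε₂ hb hδ hbound
end

section
/- Let n ≥ 1 be an integer and γ > 0 a real number such that exp(−2nγ/25) ≤ 1/2. Then the series Σ_{k=0}^{∞} (γ + 2 + k)·exp(−(n/25)·(γ + k)²) converges and satisfies Σ_{k=0}^{∞} (γ + 2 + k)·exp(−(n/25)·(γ + k)²) ≤ 4·(γ + 2)·exp(−n·γ²/25). -/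
/-- **A Gaussian-tail series bound.** For an integer `n ≥ 1` and a real `γ > 0` with
`exp(-2nγ/25) ≤ 1/2`, the series `∑_k (γ + 2 + k) exp(-(n/25)(γ + k)²)` converges and is
at most `4(γ + 2) exp(-nγ²/25)`. -/
theorem gaussian_tail_series_bound
    (n : ℕ) (hn : 1 ≤ n) (γ : ℝ) (hγ : 0 < γ)
    (h : Real.exp (-(2 * n * γ) / 25) ≤ 1 / 2) :
    Summable (fun k : ℕ => (γ + 2 + k) * Real.exp (-((n : ℝ) / 25) * (γ + k) ^ 2)) ∧
    ∑' k : ℕ, (γ + 2 + k) * Real.exp (-((n : ℝ) / 25) * (γ + k) ^ 2)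
      ≤ 4 * (γ + 2) * Real.exp (-(n : ℝ) * γ ^ 2 / 25) := by
  set r : ℝ := Real.exp (-(2 * n * γ) / 25) with hr_def
  set E : ℝ := Real.exp (-(n : ℝ) * γ ^ 2 / 25) with hE_def
  have hr_pos : 0 < r := Real.exp_pos _
  have hr_lt : r < 1 := lt_of_le_of_lt h (by norm_num)
  have hn1 : (1 : ℝ) ≤ n := by exact_mod_cast hn
  -- termwise bound
  have key : ∀ k : ℕ, (γ + 2 + k) * Real.exp (-((n : ℝ) / 25) * (γ + k) ^ 2)
      ≤ (γ + 2) * E * ((k + 1) * r ^ k) := by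
    intro k
    have hk : (0 : ℝ) ≤ k := Nat.cast_nonneg k
    have h1 : γ + 2 + k ≤ (γ + 2) * (k + 1) := by nlinarith
    have h2 : Real.exp (-((n : ℝ) / 25) * (γ + k) ^ 2) ≤ E * r ^ k := by
      have : r ^ k = Real.exp ((k : ℝ) * (-(2 * n * γ) / 25)) := by
        rw [← Real.exp_nat_mul]
      rw [this, hE_def, ← Real.exp_add]
      apply Real.exp_le_exp.mpr
      nlinarith [sq_nonneg (k : ℝ), hγ.le]
    have hpos : 0 ≤ Real.exp (-((n : ℝ) / 25) * (γ + k) ^ 2) := (Real.exp_pos _).le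
    calc (γ + 2 + k) * Real.exp (-((n : ℝ) / 25) * (γ + k) ^ 2)
        ≤ ((γ + 2) * (k + 1)) * (E * r ^ k) := by
          apply mul_le_mul h1 h2 hpos (by positivity)
      _ = (γ + 2) * E * ((k + 1) * r ^ k) := by ring
  have hs1 : Summable (fun k : ℕ => (k : ℝ) * r ^ k) := by
    have := summable_pow_mul_geometric_of_norm_lt_one (R := ℝ) 1
      (by rwa [Real.norm_eq_abs, abs_of_pos hr_pos])
    simpa using this
  have hs2 : Summable (fun k : ℕ => r ^ k) := summable_geometric_of_lt_one hr_pos.le hr_lt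
  have hsg : Summable (fun k : ℕ => ((k : ℝ) + 1) * r ^ k) := by
    have := hs1.add hs2
    simpa [add_mul] using this
  have hsg' : Summable (fun k : ℕ => (γ + 2) * E * ((k + 1) * r ^ k)) := hsg.mul_left _
  have hsum : Summable (fun k : ℕ => (γ + 2 + k) * Real.exp (-((n : ℝ) / 25) * (γ + k) ^ 2)) := by
    apply Summable.of_nonneg_of_le (fun k => by positivity) key hsg'
  refine ⟨hsum, ?_⟩
  have htsum_g : ∑' k : ℕ, ((k : ℝ) + 1) * r ^ k ≤ 4 := by
    have h1 : ∑' k : ℕ, ((k : ℝ) + 1) * r ^ k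
        = (∑' k : ℕ, (k : ℝ) * r ^ k) + ∑' k : ℕ, r ^ k := by
      rw [← Summable.tsum_add hs1 hs2]
      congr 1; ext k; ring
    rw [h1, tsum_coe_mul_geometric_of_norm_lt_one
      (by rwa [Real.norm_eq_abs, abs_of_pos hr_pos]),
      tsum_geometric_of_lt_one hr_pos.le hr_lt]
    have h2 : (1 : ℝ) / 2 ≤ 1 - r := by linarith
    have h3 : (0 : ℝ) < 1 - r := by linarith
    have heq : r / (1 - r) ^ 2 + 1 / (1 - r) = 1 / (1 - r) ^ 2 := by
      field_simp
      ring
    rw [show (1 - r)⁻¹ = 1 / (1 - r) by rw [one_div], heq, div_le_iff₀ (by positivity)]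
    nlinarith
  calc ∑' k : ℕ, (γ + 2 + k) * Real.exp (-((n : ℝ) / 25) * (γ + k) ^ 2)
      ≤ ∑' k : ℕ, (γ + 2) * E * ((k + 1) * r ^ k) := Summable.tsum_le_tsum key hsum hsg'
    _ = (γ + 2) * E * ∑' k : ℕ, ((k : ℝ) + 1) * r ^ k := by rw [tsum_mul_left]
    _ ≤ (γ + 2) * E * 4 := by
        apply mul_le_mul_of_nonneg_left htsum_g (by positivity)
    _ = 4 * (γ + 2) * E := by ring
end

section
/- Let m ≥ 1 and n ≥ 2 be integers, and let U₁, …, Uₙ be independent identically distributed random variables taking values in the finite alphabet {1, …, m}, with distribution p_i = Pr[U₁ = i]. Let p̂_i = (1/n)·#{k : U_k = i} be the empirical frequencies and Ĥ_MLE = −Σ_{i=1}^m p̂_i·log₂ p̂_i the empirical (maximum-likelihood) entropy. Then for every real ε with 0 < ε ≤ 1, setting δ = √(2·(log₂ n)²·ln(2/ε)/n), one has Pr[ |Ĥ_MLE − E[Ĥ_MLE]| ≥ δ ] ≤ ε. -/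
/-!
Changing one of the `n` samples moves one unit of count from one letter to another, and the
increments of `j ↦ (j/n) log₂ (j/n)` on `0, …, n` are at most `log₂ n / n` in absolute value, so
`Ĥ_MLE` has bounded differences `2 log₂ n / n`. McDiarmid's inequality then gives the tail
`2 exp (-2 δ² / (n (2 log₂ n / n)²)) = ε`. McDiarmid's inequality is proved by induction on `n`:
integrating out the first coordinate, Hoeffding's lemma bounds the conditional moment generating
function, and the conditional mean again has bounded differences in the remaining coordinates.
-/

open MeasureTheory ProbabilityTheory Real Finset
open scoped NNReal

/-- One-sided, which is equivalent to the symmetric condition since `Function.update` can be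
undone. -/
def BoundedDifferences {α : Type*} {n : ℕ} (F : (Fin n → α) → ℝ) (c : ℝ) : Prop :=
  ∀ (x : Fin n → α) (k : Fin n) (a : α), F (Function.update x k a) - F x ≤ c

theorem ProbabilityTheory.HasSubgaussianMGF.measureReal_abs_ge_le {Ω : Type*}
    [MeasurableSpace Ω] {μ : Measure Ω} [IsFiniteMeasure μ] {X : Ω → ℝ} {c : ℝ≥0}
    (h : HasSubgaussianMGF X c μ) {ε : ℝ} (hε : 0 ≤ ε) :
    μ.real {ω | ε ≤ |X ω|} ≤ 2 * exp (-ε ^ 2 / (2 * c)) :=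
  calc μ.real {ω | ε ≤ |X ω|}
      ≤ μ.real ({ω | ε ≤ X ω} ∪ {ω | ε ≤ (-X) ω}) :=
        measureReal_mono fun ω (hω : ε ≤ |X ω|) => le_abs.mp hω
    _ ≤ μ.real {ω | ε ≤ X ω} + μ.real {ω | ε ≤ (-X) ω} := measureReal_union_le _ _
    _ ≤ exp (-ε ^ 2 / (2 * c)) + exp (-ε ^ 2 / (2 * c)) :=
        add_le_add (h.measure_ge_le hε) (h.neg.measure_ge_le hε)
    _ = 2 * exp (-ε ^ 2 / (2 * c)) := (two_mul _).symm

section McDiarmid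

variable {α : Type*} [MeasurableSpace α] [MeasurableSingletonClass α] [Finite α]
  (P : Measure α) [IsProbabilityMeasure P]

theorem integral_pi_fin_succ {n : ℕ} (f : (Fin (n + 1) → α) → ℝ) :
    ∫ x, f x ∂(Measure.pi fun _ => P)
      = ∫ y, ∫ a, f (Fin.cons a y) ∂P ∂(Measure.pi fun _ : Fin n => P) := by
  rw [← ((measurePreserving_piFinSuccAbove (fun _ => P) 0).symm).integral_comp',
    integral_prod_symm _ Integrable.of_finite]
  simp [MeasurableEquiv.piFinSuccAbove_symm_apply, Fin.insertNthEquiv]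

theorem hasSubgaussianMGF_sub_integral_of_forall_sub_le (f : α → ℝ) (c : ℝ≥0)
    (hf : ∀ a b, f a - f b ≤ c) :
    HasSubgaussianMGF (fun a => f a - ∫ b, f b ∂P) ((c / 2) ^ 2) P := by
  have : Nonempty α := nonempty_of_isProbabilityMeasure P
  have hlow : ∀ a, ⨅ b, f b ≤ f a := fun a => ciInf_le (Set.finite_range f).bddBelow a
  have hupp : ∀ a, f a ≤ (⨅ b, f b) + c := fun a => by
    have : f a - c ≤ ⨅ b, f b := le_ciInf fun b => by linarith [hf a b]
    linarith
  have := hasSubgaussianMGF_of_mem_Icc (μ := P) (X := f) (a := ⨅ b, f b) (b := (⨅ b, f b) + c)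
    (measurable_of_finite f).aemeasurable (ae_of_all _ fun a => ⟨hlow a, hupp a⟩)
  simpa using this

theorem BoundedDifferences.integral_cons {n : ℕ} {F : (Fin (n + 1) → α) → ℝ} {c : ℝ}
    (hF : BoundedDifferences F c) : BoundedDifferences (fun y => ∫ a, F (Fin.cons a y) ∂P) c := by
  intro y k b
  rw [← integral_sub Integrable.of_finite Integrable.of_finite]
  calc ∫ a, F (Fin.cons a (Function.update y k b)) - F (Fin.cons a y) ∂P
      ≤ ∫ _, c ∂P := integral_mono Integrable.of_finite Integrable.of_finite fun a => by
        simpa only [Fin.cons_update] using hF (Fin.cons a y) k.succ b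
    _ = c := by simp

theorem hasSubgaussianMGF_of_boundedDifferences {n : ℕ} {F : (Fin n → α) → ℝ} {c : ℝ≥0}
    (hF : BoundedDifferences F c) :
    HasSubgaussianMGF (fun x => F x - ∫ y, F y ∂(Measure.pi fun _ => P)) (n * (c / 2) ^ 2)
      (Measure.pi fun _ => P) := by
  induction n with
  | zero =>
    have hconst : (fun x => F x - ∫ y, F y ∂(Measure.pi fun _ => P)) = 0 := by
      funext x
      simp [Subsingleton.elim _ x]
    simp [hconst]
  | succ n ih =>
    set G : (Fin n → α) → ℝ := fun y => ∫ a, F (Fin.cons a y) ∂P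
    set E := ∫ y, F y ∂(Measure.pi fun _ => P)
    have hE : E = ∫ y, G y ∂(Measure.pi fun _ => P) := integral_pi_fin_succ P F
    have hG := ih (hF.integral_cons P)
    refine ⟨fun t => Integrable.of_finite, fun t => ?_⟩
    have hinner (y : Fin n → α) :
        mgf (fun a => F (Fin.cons a y) - G y) P t ≤ exp ((c / 2) ^ 2 * t ^ 2 / 2) :=
      (hasSubgaussianMGF_sub_integral_of_forall_sub_le P (fun a => F (Fin.cons a y)) c
        fun a b => by simpa only [Fin.update_cons_zero] using hF (Fin.cons b y) 0 a).mgf_le t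
    calc mgf (fun x => F x - E) (Measure.pi fun _ => P) t
        = ∫ y, exp (t * (G y - E)) * mgf (fun a => F (Fin.cons a y) - G y) P t
            ∂(Measure.pi fun _ => P) := by
          simp only [mgf]
          rw [integral_pi_fin_succ]
          refine integral_congr_ae (ae_of_all _ fun y => ?_)
          simp only [← integral_const_mul, ← exp_add]
          congr 1 with a
          ring_nf
      _ ≤ ∫ y, exp (t * (G y - E)) * exp ((c / 2) ^ 2 * t ^ 2 / 2) ∂(Measure.pi fun _ => P) :=
          integral_mono Integrable.of_finite Integrable.of_finite fun y =>
            mul_le_mul_of_nonneg_left (hinner y) (exp_pos _).le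
      _ = mgf (fun y => G y - E) (Measure.pi fun _ => P) t * exp ((c / 2) ^ 2 * t ^ 2 / 2) :=
          integral_mul_const _ _
      _ ≤ exp (n * (c / 2) ^ 2 * t ^ 2 / 2) * exp ((c / 2) ^ 2 * t ^ 2 / 2) := by
          rw [hE]
          gcongr
          simpa using hG.mgf_le t
      _ = exp (((n + 1 : ℕ) * (c / 2) ^ 2 : ℝ≥0) * t ^ 2 / 2) := by
          rw [← exp_add]
          push_cast
          ring_nf

theorem measureReal_abs_sub_integral_ge_le_of_boundedDifferences {n : ℕ}
    {F : (Fin n → α) → ℝ} {c : ℝ≥0} (hF : BoundedDifferences F c) {ε : ℝ} (hε : 0 ≤ ε) :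
    (Measure.pi fun _ => P).real {x | ε ≤ |F x - ∫ y, F y ∂(Measure.pi fun _ => P)|}
      ≤ 2 * exp (-2 * ε ^ 2 / (n * c ^ 2)) := by
  convert (hasSubgaussianMGF_of_boundedDifferences P hF).measureReal_abs_ge_le hε using 3
  push_cast
  ring

end McDiarmid

theorem natCast_mul_log_le_succ_mul_log (j : ℕ) :
    (j : ℝ) * log j ≤ (j + 1) * log (j + 1) := by
  rcases j.eq_zero_or_pos with rfl | hj
  · simp
  · have hj' : (0 : ℝ) < j := Nat.cast_pos.mpr hj
    have hlog : log j ≤ log (j + 1) := log_le_log hj' (by linarith)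
    nlinarith [log_nonneg (by linarith : (1 : ℝ) ≤ j + 1)]

theorem succ_mul_log_succ_sub_mul_log_le (j : ℕ) :
    (j + 1 : ℝ) * log (j + 1) - j * log j ≤ 2 * log (j + 1) := by
  rcases j.eq_zero_or_pos with rfl | hj
  · simp
  have hj0 : (0 : ℝ) < j := Nat.cast_pos.mpr hj
  have hj1 : (0 : ℝ) < j + 1 := by positivity
  have hj1' : (j : ℝ) + 1 ≠ 0 := hj1.ne'
  -- Bernoulli's inequality `1 + j a ≤ (1 + a) ^ j` at `a = -1 / (j + 1)`
  have hbernoulli : ((j : ℝ) + 1) ^ j ≤ (j + 1) * (j : ℝ) ^ j := by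
    have h := one_add_mul_le_pow (a := -1 / ((j : ℝ) + 1))
      (by rw [neg_div, neg_le_neg_iff, div_le_iff₀ hj1]; linarith) j
    rw [show 1 + -1 / ((j : ℝ) + 1) = j / (j + 1) by field_simp; ring, div_pow,
      show 1 + (j : ℝ) * (-1 / (j + 1)) = 1 / (j + 1) by field_simp; ring,
      div_le_div_iff₀ hj1 (by positivity)] at h
    linarith
  have hlog := log_le_log (by positivity) hbernoulli
  rw [log_mul hj1' (by positivity), log_pow, log_pow] at hlog
  linarith

theorem abs_succ_div_mul_log_sub_div_mul_log_le {j n : ℕ} (hj : j + 1 ≤ n) :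
    |(j + 1 : ℝ) / n * log ((j + 1) / n) - j / n * log (j / n)| ≤ log n / n := by
  have hn : (0 : ℝ) < n := by exact_mod_cast (show 0 < n by omega)
  have hdiv (t : ℝ) (ht : 0 ≤ t) : t / n * log (t / n) = (t * log t - t * log n) / n := by
    rcases ht.eq_or_lt with rfl | ht
    · simp
    · rw [log_div ht.ne' hn.ne']
      ring
  have hle : log (j + 1) ≤ log n := log_le_log (by positivity) (by exact_mod_cast hj)
  rw [hdiv _ (by positivity), hdiv _ (by positivity), ← sub_div, abs_div, abs_of_pos hn,
    div_le_div_iff_of_pos_right hn, abs_le]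
  constructor <;>
    nlinarith [natCast_mul_log_le_succ_mul_log j, succ_mul_log_succ_sub_mul_log_le j]

theorem card_filter_eq_card_filter_erase_add {α : Type*} [DecidableEq α] {n : ℕ}
    (x : Fin n → α) (k : Fin n) (i : α) :
    #{j | x j = i} = #{j ∈ univ.erase k | x j = i} + if x k = i then 1 else 0 := by
  simp only [card_filter]
  exact (sum_erase_add _ _ (mem_univ k)).symm

section Counting

variable {α : Type*} [Fintype α] [DecidableEq α]

theorem sum_apply_add_ite_eq (g : ℕ → ℝ) (c : α → ℕ) (b : α) :
    ∑ i, g (c i + if b = i then 1 else 0) = ∑ i, g (c i) + (g (c b + 1) - g (c b)) := by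
  have h (i : α) : g (c i + if b = i then 1 else 0)
      = g (c i) + if b = i then g (c b + 1) - g (c b) else 0 := by
    split_ifs with hb
    · subst hb; ring
    · simp
  simp only [h, sum_add_distrib, sum_ite_eq, mem_univ, if_true]

theorem boundedDifferences_sum_comp_card {n : ℕ} {g : ℕ → ℝ} {d : ℝ}
    (hg : ∀ j, j + 1 ≤ n → |g (j + 1) - g j| ≤ d) :
    BoundedDifferences (fun x : Fin n → α => ∑ i, g #{k | x k = i}) (2 * d) := by
  intro x k a
  set c : α → ℕ := fun i => #{j ∈ univ.erase k | x j = i}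
  have hx (i : α) : #{j | x j = i} = c i + if x k = i then 1 else 0 :=
    card_filter_eq_card_filter_erase_add x k i
  have hxa (i : α) : #{j | Function.update x k a j = i} = c i + if a = i then 1 else 0 := by
    rw [card_filter_eq_card_filter_erase_add _ k, Function.update_self]
    congr 2
    exact filter_congr fun j hj => by rw [Function.update_of_ne (ne_of_mem_erase hj)]
  have hc (i : α) : c i + 1 ≤ n := by
    have := (card_filter_le (univ.erase k) fun j => x j = i).trans_eq
      (card_erase_of_mem (mem_univ k))
    simp only [card_univ, Fintype.card_fin] at this
    simp only [c]
    have := k.pos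
    omega
  simp only [hx, hxa, sum_apply_add_ite_eq]
  have ha := abs_le.mp (hg _ (hc a))
  have hb := abs_le.mp (hg _ (hc (x k)))
  linarith [ha.2, hb.1]

noncomputable def empiricalEntropy {n : ℕ} (x : Fin n → α) : ℝ :=
  -∑ i, (#{k | x k = i} : ℝ) / n * logb 2 (#{k | x k = i} / n)

theorem boundedDifferences_empiricalEntropy (n : ℕ) :
    BoundedDifferences (empiricalEntropy (α := α) (n := n)) (2 * logb 2 n / n) := by
  have h := boundedDifferences_sum_comp_card (α := α) (n := n)
    (g := fun j => -((j : ℝ) / n * logb 2 (j / n))) (d := logb 2 n / n) fun j hj => by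
      have := abs_succ_div_mul_log_sub_div_mul_log_le hj
      simp only [logb, Nat.cast_add, Nat.cast_one, neg_sub_neg]
      rw [← mul_div_assoc, ← mul_div_assoc, ← sub_div, abs_div, abs_of_pos (log_pos one_lt_two),
        div_right_comm, abs_sub_comm]
      exact div_le_div_of_nonneg_right this (log_pos one_lt_two).le
  convert h using 1
  · funext x
    simp only [empiricalEntropy, sum_neg_distrib]
  · ring

end Counting

theorem map_fun_eq_pi_map_of_iIndepFun {Ω ι β : Type*} [MeasurableSpace Ω] {μ : Measure Ω}
    [IsProbabilityMeasure μ] [Fintype ι] [MeasurableSpace β] [MeasurableSingletonClass β]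
    [Countable β] {U : ι → Ω → β} (hmeas : ∀ k, Measurable (U k)) (hindep : iIndepFun U μ)
    (k₀ : ι) (hlaw : ∀ k b, μ.real (U k ⁻¹' {b}) = μ.real (U k₀ ⁻¹' {b})) :
    μ.map (fun ω k => U k ω) = Measure.pi fun _ => μ.map (U k₀) := by
  rw [(iIndepFun_iff_map_fun_eq_pi_map fun k => (hmeas k).aemeasurable).mp hindep]
  congr with k : 1
  refine Measure.ext_of_singleton fun b => ?_
  rw [Measure.map_apply (hmeas _) (measurableSet_singleton b),
    Measure.map_apply (hmeas _) (measurableSet_singleton b)]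
  exact (ENNReal.toReal_eq_toReal_iff' (measure_ne_top _ _) (measure_ne_top _ _)).mp (hlaw k b)

theorem empirical_entropy_concentration_general
    {Ω : Type*} [MeasurableSpace Ω] (μ : Measure Ω) [IsProbabilityMeasure μ]
    (m n : ℕ) (hn : 2 ≤ n)
    (U : Fin n → Ω → Fin m)
    (hmeas : ∀ k, Measurable (U k))
    (hindep : iIndepFun U μ)
    (p : Fin m → ℝ) (hp : ∀ k i, (μ {ω | U k ω = i}).toReal = p i)
    (phat : Fin m → Ω → ℝ)
    (hphat : ∀ i ω, phat i ω = ((Finset.univ.filter fun k => U k ω = i).card : ℝ) / n)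
    (Hmle : Ω → ℝ)
    (hHmle : ∀ ω, Hmle ω = -∑ i : Fin m, phat i ω * Real.logb 2 (phat i ω))
    (ε : ℝ) (hε₀ : 0 < ε) (hε₁ : ε ≤ 1) :
    μ {ω | Real.sqrt (2 * (Real.logb 2 n) ^ 2 * Real.log (2 / ε) / n)
          ≤ |Hmle ω - ∫ ω', Hmle ω' ∂μ|}
      ≤ ENNReal.ofReal ε := by
  set V : Ω → Fin n → Fin m := fun ω k => U k ω
  have hV : Measurable V := measurable_pi_lambda _ hmeas
  set P := μ.map (U ⟨0, by omega⟩)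
  have : IsProbabilityMeasure P := Measure.isProbabilityMeasure_map (hmeas _).aemeasurable
  have hlaw : μ.map V = Measure.pi fun _ => P :=
    map_fun_eq_pi_map_of_iIndepFun hmeas hindep _ fun k i => (hp k i).trans (hp _ i).symm
  have hH (ω : Ω) : Hmle ω = empiricalEntropy (V ω) := by
    simp only [hHmle, hphat, empiricalEntropy, V]
  set L := logb 2 n
  have hL : 0 < L := logb_pos one_lt_two (by exact_mod_cast hn)
  set δ := sqrt (2 * L ^ 2 * log (2 / ε) / n)
  have hbound : 2 * exp (-2 * δ ^ 2 / (n * (2 * L / n) ^ 2)) = ε := by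
    have hlog : 0 < log (2 / ε) := log_pos (by rw [lt_div_iff₀ hε₀]; linarith)
    have hn0 : (0 : ℝ) < n := by positivity
    rw [sq_sqrt (by positivity), show -2 * (2 * L ^ 2 * log (2 / ε) / n) / (n * (2 * L / n) ^ 2)
      = -log (2 / ε) by field_simp, exp_neg, exp_log (by positivity)]
    field_simp
  simp only [hH]
  rw [← integral_map hV.aemeasurable (measurable_of_finite _).aestronglyMeasurable, hlaw,
    ← Set.preimage_ofPred_eq (p := fun x => δ ≤ |empiricalEntropy x - _|),
    ← Measure.map_apply hV (Set.toFinite _).measurableSet, hlaw, ← ofReal_measureReal]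
  exact ENNReal.ofReal_le_ofReal <| hbound ▸
    measureReal_abs_sub_integral_ge_le_of_boundedDifferences P (c := ⟨2 * L / n, by positivity⟩)
      (boundedDifferences_empiricalEntropy n) (sqrt_nonneg _)

/-- **Concentration of the empirical entropy around its mean (Antos–Kontoyiannis).**
For `n ≥ 2` i.i.d. samples from a distribution on a finite alphabet of size `m`, with
empirical entropy `Ĥ_MLE`, for every `ε ∈ (0, 1]`, setting
`δ = √(2 (log₂ n)² ln(2/ε) / n)`, one has `Pr[|Ĥ_MLE - E[Ĥ_MLE]| ≥ δ] ≤ ε`. -/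
theorem empirical_entropy_concentration
    {Ω : Type*} [MeasurableSpace Ω] (μ : Measure Ω) [IsProbabilityMeasure μ]
    (m n : ℕ) (hm : 1 ≤ m) (hn : 2 ≤ n)
    (U : Fin n → Ω → Fin m)
    (hmeas : ∀ k, Measurable (U k))
    (hindep : iIndepFun U μ)
    (p : Fin m → ℝ) (hp : ∀ k i, (μ {ω | U k ω = i}).toReal = p i)
    (phat : Fin m → Ω → ℝ)
    (hphat : ∀ i ω, phat i ω = ((Finset.univ.filter fun k => U k ω = i).card : ℝ) / n)
    (Hmle : Ω → ℝ)
    (hHmle : ∀ ω, Hmle ω = -∑ i : Fin m, phat i ω * Real.logb 2 (phat i ω))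
    (ε : ℝ) (hε₀ : 0 < ε) (hε₁ : ε ≤ 1) :
    μ {ω | Real.sqrt (2 * (Real.logb 2 n) ^ 2 * Real.log (2 / ε) / n)
          ≤ |Hmle ω - ∫ ω', Hmle ω' ∂μ|}
      ≤ ENNReal.ofReal ε :=
  empirical_entropy_concentration_general μ m n hn U hmeas hindep p hp phat hphat Hmle hHmle ε hε₀
    hε₁
end
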